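/- Hard ball systems are transverse: let I be the edge set of a disconnected graph G on vertices {1,…,N}, let E⁺ = span{L_{i,j} : (i,j) ∈ I} ⊆ 𝓩, and choose i₀, j₀ in different connected components of G. Then the orthogonal projection (with respect to the mass inner product) of Ã_{i₀,j₀} = A_{i₀,j₀} ∩ 𝓩 onto E⁺ is all of E⁺. -/
import Mathlib


open RealInnerProductSpace

/-- The velocity space `𝓩 = {v : ∑ mᵢ • vᵢ = 0}` of a hard ball system. -/
noncomputable def massZ (N ν : ℕ) (m : Fin N → ℝ) :
    Submodule ℝ (Fin N → EuclideanSpace ℝ (Fin ν)) :=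
  LinearMap.ker (∑ l : Fin N, m l •
    (LinearMap.proj l : (Fin N → EuclideanSpace ℝ (Fin ν)) →ₗ[ℝ] EuclideanSpace ℝ (Fin ν)))

/-- The base space `L_{i,j} = {v : v_k = 0 for k ∉ {i,j}, mᵢ • vᵢ + m_j • v_j = 0}`. -/
noncomputable def baseSpace (N ν : ℕ) (m : Fin N → ℝ) (i j : Fin N) :
    Submodule ℝ (Fin N → EuclideanSpace ℝ (Fin ν)) :=
  (⨅ k ∈ ({i, j} : Set (Fin N))ᶜ,
      LinearMap.ker (LinearMap.proj (R := ℝ)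
        (φ := fun _ : Fin N => EuclideanSpace ℝ (Fin ν)) k)) ⊓
  LinearMap.ker (m i • LinearMap.proj i + m j • LinearMap.proj j :
    (Fin N → EuclideanSpace ℝ (Fin ν)) →ₗ[ℝ] EuclideanSpace ℝ (Fin ν))

/-- Unfolding of membership in `baseSpace`. -/
lemma mem_baseSpace_iff {N ν : ℕ} (m : Fin N → ℝ) (i j : Fin N)
    (w : Fin N → EuclideanSpace ℝ (Fin ν)) (hw : w ∈ baseSpace N ν m i j) :
    (∀ k, k ≠ i → k ≠ j → w k = 0) ∧ m i • w i + m j • w j = 0 := by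
  obtain ⟨h1, h2⟩ := Submodule.mem_inf.mp hw
  constructor
  · intro k hki hkj
    simp only [Submodule.mem_iInf] at h1
    have := h1 k (by simp [hki, hkj])
    simpa using this
  · simpa using h2

/-- Hard ball systems are transverse: if the collision graph with edge set `I` is such that
`i₀` and `j₀` lie in different connected components, then the orthogonal projection (with
respect to the mass inner product) of `Ã_{i₀,j₀} = A_{i₀,j₀} ∩ 𝓩` onto
`E⁺ = span {L_{i,j} : (i,j) ∈ I}` is all of `E⁺`; i.e. every `e ∈ E⁺` is the projection of
some `a ∈ Ã_{i₀,j₀}`, meaning `a − e` is mass-orthogonal to `E⁺`. -/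
theorem hardBall_transverse
    {N ν : ℕ} (hN : 2 ≤ N) (hν : 2 ≤ ν) (m : Fin N → ℝ) (hm : ∀ l, 0 < m l)
    (G : SimpleGraph (Fin N)) (i₀ j₀ : Fin N) (hsep : ¬ G.Reachable i₀ j₀) :
    ∀ e ∈ (⨆ p ∈ {p : Fin N × Fin N | G.Adj p.1 p.2}, baseSpace N ν m p.1 p.2),
      ∃ a ∈ massZ N ν m ⊓
          LinearMap.ker
            ((LinearMap.proj (R := ℝ) (φ := fun _ : Fin N => EuclideanSpace ℝ (Fin ν)) i₀)
              - (LinearMap.proj j₀)),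
        ∀ w ∈ (⨆ p ∈ {p : Fin N × Fin N | G.Adj p.1 p.2}, baseSpace N ν m p.1 p.2),
          ∑ l, m l * ⟪a l - e l, w l⟫ = 0 := by
  classical
  intro e he
  -- the connected component of i₀, masses
  set S : Finset (Fin N) := Finset.univ.filter (fun k => G.Reachable i₀ k) with hS
  have hi₀S : i₀ ∈ S := Finset.mem_filter.mpr ⟨Finset.mem_univ _, SimpleGraph.Reachable.refl i₀⟩
  have hj₀S : j₀ ∉ S := by simp [hS, hsep]
  set M₁ : ℝ := ∑ k ∈ S, m k with hM₁def
  set M₂ : ℝ := ∑ k ∈ Finset.univ.filter (fun k => ¬ G.Reachable i₀ k), m k with hM₂def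
  have hM₁ : 0 < M₁ := Finset.sum_pos (fun k _ => hm k) ⟨i₀, hi₀S⟩
  have hM₂ : 0 < M₂ := Finset.sum_pos (fun k _ => hm k)
    ⟨j₀, by simp [hsep]⟩
  set M : ℝ := M₁ + M₂ with hMdef
  have hM : 0 < M := by positivity
  set c : EuclideanSpace ℝ (Fin ν) := e i₀ - e j₀ with hc
  set α : Fin N → ℝ := fun k => if G.Reachable i₀ k then -M₂/M else M₁/M with hα
  set a : Fin N → EuclideanSpace ℝ (Fin ν) := fun k => e k + α k • c with ha
  -- E⁺ ≤ massZ
  have hsup_Z : (⨆ p ∈ {p : Fin N × Fin N | G.Adj p.1 p.2}, baseSpace N ν m p.1 p.2)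
      ≤ massZ N ν m := by
    refine iSup₂_le ?_
    rintro ⟨i, j⟩ hadj w hw
    have hadj' : G.Adj i j := hadj
    have hij : i ≠ j := hadj'.ne
    obtain ⟨hzero, hker⟩ := mem_baseSpace_iff m i j w hw
    simp only [massZ, LinearMap.mem_ker, LinearMap.sum_apply, LinearMap.smul_apply,
      LinearMap.proj_apply]
    have hsub : ∑ l ∈ ({i, j} : Finset (Fin N)), m l • w l = ∑ l, m l • w l := by
      refine Finset.sum_subset (Finset.subset_univ _) ?_
      intro k _ hk
      simp only [Finset.mem_insert, Finset.mem_singleton, not_or] at hk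
      rw [hzero k hk.1 hk.2, smul_zero]
    rw [← hsub, Finset.sum_pair hij, hker]
  -- e ∈ massZ
  have heZ : ∑ l, m l • e l = 0 := by
    have := hsup_Z he
    simpa only [massZ, LinearMap.mem_ker, LinearMap.sum_apply, LinearMap.smul_apply,
      LinearMap.proj_apply] using this
  have hamem : a ∈ massZ N ν m ⊓
      LinearMap.ker
        ((LinearMap.proj (R := ℝ) (φ := fun _ : Fin N => EuclideanSpace ℝ (Fin ν)) i₀)
          - (LinearMap.proj j₀)) := by
    rw [Submodule.mem_inf]
    constructor
    · -- a ∈ massZ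
      rw [massZ, LinearMap.mem_ker]
      have happ : (∑ l : Fin N, m l •
          (LinearMap.proj l : (Fin N → EuclideanSpace ℝ (Fin ν)) →ₗ[ℝ]
            EuclideanSpace ℝ (Fin ν))) a = ∑ l, m l • a l := by
        simp [LinearMap.sum_apply]
      rw [happ]
      have : ∑ l, m l • a l = ∑ l, m l • e l + (∑ l, m l * α l) • c := by
        rw [Finset.sum_smul]
        rw [← Finset.sum_add_distrib]
        refine Finset.sum_congr rfl ?_
        intro k _
        rw [ha]
        simp [smul_smul, smul_add, mul_comm]
      rw [this, heZ, zero_add]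
      have hsum0 : ∑ l, m l * α l = 0 := by
        rw [← Finset.sum_filter_add_sum_filter_not Finset.univ (fun k => G.Reachable i₀ k)]
        have h1 : ∑ l ∈ Finset.univ.filter (fun k => G.Reachable i₀ k), m l * α l
            = M₁ * (-M₂/M) := by
          rw [hM₁def, Finset.sum_mul]
          refine Finset.sum_congr rfl ?_
          intro k hk
          have hr := (Finset.mem_filter.mp hk).2
          simp [hα, hr]
        have h2 : ∑ l ∈ Finset.univ.filter (fun k => ¬ G.Reachable i₀ k), m l * α l
            = M₂ * (M₁/M) := by
          rw [hM₂def, Finset.sum_mul]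
          refine Finset.sum_congr rfl ?_
          intro k hk
          have hr := (Finset.mem_filter.mp hk).2
          simp [hα, hr]
        rw [h1, h2]
        field_simp
        ring
      rw [hsum0, zero_smul]
    · -- a i₀ = a j₀
      rw [LinearMap.mem_ker, LinearMap.sub_apply, LinearMap.proj_apply, LinearMap.proj_apply]
      have hαi₀ : α i₀ = -M₂/M := if_pos (SimpleGraph.Reachable.refl i₀)
      have hαj₀ : α j₀ = M₁/M := if_neg hsep
      have h1 : a i₀ = e i₀ + (-M₂/M) • c := by rw [show a i₀ = e i₀ + α i₀ • c from rfl, hαi₀]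
      have h2 : a j₀ = e j₀ + (M₁/M) • c := by rw [show a j₀ = e j₀ + α j₀ • c from rfl, hαj₀]
      rw [h1, h2]
      have hcoef : (-M₂/M : ℝ) = M₁/M - 1 := by
        field_simp
        ring
      rw [hcoef, sub_smul, one_smul, hc]
      abel
  refine ⟨a, hamem, ?_⟩
  -- orthogonality: build the linear functional w ↦ ∑ m l * ⟪α l • c, w l⟫
  set φ : (Fin N → EuclideanSpace ℝ (Fin ν)) →ₗ[ℝ] ℝ :=
    ∑ l, m l • (((innerSL ℝ (α l • c) : EuclideanSpace ℝ (Fin ν) →L[ℝ] ℝ)).toLinearMap.comp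
      (LinearMap.proj l)) with hφdef
  have hφ : ∀ w, φ w = ∑ l, m l * ⟪(α l • c : EuclideanSpace ℝ (Fin ν)), w l⟫ := by
    intro w
    simp only [hφdef, LinearMap.sum_apply, LinearMap.smul_apply, LinearMap.coe_comp,
      Function.comp_apply, ContinuousLinearMap.coe_coe, innerSL_apply_apply, LinearMap.proj_apply,
      smul_eq_mul]
  have hsup_ker : (⨆ p ∈ {p : Fin N × Fin N | G.Adj p.1 p.2}, baseSpace N ν m p.1 p.2)
      ≤ LinearMap.ker φ := by
    refine iSup₂_le ?_
    rintro ⟨i, j⟩ hadj w hw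
    have hadj' : G.Adj i j := hadj
    have hij : i ≠ j := hadj'.ne
    obtain ⟨hzero, hker⟩ := mem_baseSpace_iff m i j w hw
    rw [LinearMap.mem_ker, hφ]
    have hsub : ∑ l ∈ ({i, j} : Finset (Fin N)),
        m l * ⟪(α l • c : EuclideanSpace ℝ (Fin ν)), w l⟫
        = ∑ l, m l * ⟪(α l • c : EuclideanSpace ℝ (Fin ν)), w l⟫ := by
      refine Finset.sum_subset (Finset.subset_univ _) ?_
      intro k _ hk
      simp only [Finset.mem_insert, Finset.mem_singleton, not_or] at hk
      rw [hzero k hk.1 hk.2, inner_zero_right, mul_zero]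
    rw [← hsub, Finset.sum_pair hij]
    have hαij : α i = α j := by
      have : G.Reachable i₀ i ↔ G.Reachable i₀ j :=
        ⟨fun h => h.trans hadj'.reachable, fun h => h.trans hadj'.symm.reachable⟩
      simp only [hα]
      by_cases h : G.Reachable i₀ i
      · rw [if_pos h, if_pos (this.mp h)]
      · rw [if_neg h, if_neg (fun h' => h (this.mpr h'))]
    have key : m i * ⟪(α i • c : EuclideanSpace ℝ (Fin ν)), w i⟫
        + m j * ⟪(α j • c : EuclideanSpace ℝ (Fin ν)), w j⟫
        = α i * ⟪c, m i • w i + m j • w j⟫ := by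
      rw [← hαij]
      rw [inner_add_right, real_inner_smul_left, real_inner_smul_left,
        real_inner_smul_right, real_inner_smul_right]
      ring
    rw [key, hker, inner_zero_right, mul_zero]
  intro w hw
  have := hsup_ker hw
  rw [LinearMap.mem_ker, hφ] at this
  rw [← this]
  refine Finset.sum_congr rfl ?_
  intro k _
  congr 2
  show e k + α k • c - e k = α k • c
  abel
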